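/- Fix x₀ ∈ X. The space D̊^s_{p,q}(X) of sequences u: X → ℂ with u(x₀) = 0 and |du| ∈ I^s_{p,q}(X), equipped with the quasinorm u ↦ ‖du‖_{I^s_{p,q}(X)}, is complete for all 0 < s < ∞, 0 < p, q ≤ ∞; moreover, any Cauchy sequence in it converges pointwise on X. -/

import Mathlib

open MeasureTheory Metric Filter ENNReal NNReal

noncomputable section

/-- ℓ^p-type sum with weights, with the obvious modification (sup) when `p = ∞`. -/
def sumPartG {ι : Type*} (p : ℝ≥0∞) (w : ι → ℝ≥0∞) (f : ι → ℝ≥0∞) : ℝ≥0∞ :=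
  if p = ∞ then ⨆ i, f i else (∑' i, w i * f i ^ p.toReal) ^ (1 / p.toReal)

/-- The ball associated to a vertex `x` of the hyperbolic filling. -/
def vBall {Z X : Type*} [MetricSpace Z] (ξ : X → Z) (lvl : X → ℤ) (x : X) : Set Z :=
  Metric.ball (ξ x) ((2:ℝ) ^ (-(lvl x)))

/-- The sequence-space quasinorm of `I^s_{p,q}(X)`, for `g : X → ℝ≥0∞`. -/
def seqNorm {Z X : Type*} [MetricSpace Z] [MeasurableSpace Z] (μ : Measure Z)
    (ξ : X → Z) (lvl : X → ℤ) (s : ℝ) (p q : ℝ≥0∞) (g : X → ℝ≥0∞) : ℝ≥0∞ :=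
  sumPartG q (fun _ : ℤ => 1)
    (fun k => (2 : ℝ≥0∞) ^ ((k : ℝ) * s) *
      sumPartG p (fun x : {x : X // lvl x = k} => μ (vBall ξ lvl x.1)) (fun x => g x.1))

/-- The edge relation of the hyperbolic filling graph. -/
def edgeRel {Z X : Type*} [MetricSpace Z] (ξ : X → Z) (lvl : X → ℤ) (x y : X) : Prop :=
  x ≠ y ∧ |lvl x - lvl y| ≤ 1 ∧ (vBall ξ lvl x ∩ vBall ξ lvl y).Nonempty

/-- The magnitude `|du|` of the discrete derivative of `u : X → ℂ`. -/
def eDu {Z X : Type*} [MetricSpace Z] (ξ : X → Z) (lvl : X → ℤ) (u : X → ℂ) (x : X) : ℝ≥0∞ :=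
  (∑' y : {y : X // edgeRel ξ lvl x y}, (‖u y.1 - u x‖₊ : ℝ≥0∞) ^ (2:ℝ)) ^ ((1:ℝ)/2)

/-- The Poisson extension of `f`. -/
def poisson {Z X : Type*} [MetricSpace Z] [MeasurableSpace Z] (μ : Measure Z)
    (ξ : X → Z) (lvl : X → ℤ) (f : Z → ℂ) (x : X) : ℂ :=
  ⨍ z in vBall ξ lvl x, f z ∂μ

/-- The discrete convolution `T_n u = ∑_{|x| = n} u(x) ψ_x`. -/
def discConv {Z X : Type*} (lvl : X → ℤ) (ψ : X → Z → ℝ) (u : X → ℂ) (n : ℤ) (z : Z) : ℂ :=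
  ∑' x : {x : X // lvl x = n}, (ψ x.1 z : ℂ) * u x.1

/-!
The discrete derivative controls differences along edges: `‖u y - u x‖ ≤ |du|(x)` when `x ∼ y`,
and one term of the `I^s_{p,q}` quasinorm bounds `|du|(x)` by `‖du‖` up to a factor depending on
`x` (finite since balls have positive finite measure). The hyperbolic filling is connected, so
summing along a path from `x₀` gives `‖u x - u x₀‖ ≤ C_x ‖du‖`. Hence a Cauchy sequence vanishing
at `x₀` converges pointwise, and Fatou's lemma, applied to the sums defining the quasinorm, shows
that it converges to its pointwise limit in the quasinorm.
-/

namespace ENNReal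

lemma rpow_add_le_two_rpow_mul_rpow_add_rpow {r : ℝ} (hr : 0 ≤ r) (a b : ℝ≥0∞) :
    (a + b) ^ r ≤ 2 ^ r * (a ^ r + b ^ r) :=
  calc (a + b) ^ r ≤ (2 * max a b) ^ r :=
        rpow_le_rpow (two_mul (max a b) ▸ add_le_add le_sup_left le_sup_right) hr
    _ = 2 ^ r * max a b ^ r := mul_rpow_of_nonneg _ _ hr
    _ ≤ 2 ^ r * (a ^ r + b ^ r) := by
        gcongr
        rcases le_total a b with h | h
        · rw [max_eq_right h]; exact le_add_self
        · rw [max_eq_left h]; exact le_self_add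

lemma liminf_rpow {r : ℝ} (hr : 0 < r) (a : ℕ → ℝ≥0∞) :
    liminf (fun n => a n ^ r) atTop = liminf a atTop ^ r :=
  ((orderIsoRpow r hr).liminf_apply (by isBoundedDefault) (by isBoundedDefault)
    (by isBoundedDefault) (by isBoundedDefault)).symm

lemma tsum_liminf_le {ι : Type*} (f : ℕ → ι → ℝ≥0∞) :
    ∑' i, liminf (fun n => f n i) atTop ≤ liminf (fun n => ∑' i, f n i) atTop := by
  let : MeasurableSpace ι := ⊤
  calc ∑' i, liminf (fun n => f n i) atTop
      = ∫⁻ i, liminf (fun n => f n i) atTop ∂Measure.count :=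
        (lintegral_count' measurable_from_top).symm
    _ ≤ liminf (fun n => ∫⁻ i, f n i ∂Measure.count) atTop :=
        lintegral_liminf_le fun _ => measurable_from_top
    _ = liminf (fun n => ∑' i, f n i) atTop := by
        simp only [lintegral_count' measurable_from_top]

lemma cauchySeq_of_edist_le_mul {α : Type*} [PseudoEMetricSpace α] {a : ℕ → α}
    {N : ℕ → ℕ → ℝ≥0∞} {C : ℝ≥0∞} (hC : C ≠ ∞) (h : ∀ m n, edist (a m) (a n) ≤ C * N m n)
    (hN : ∀ ε : ℝ≥0∞, 0 < ε → ∃ M, ∀ m n, M ≤ m → M ≤ n → N m n < ε) : CauchySeq a := by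
  refine EMetric.cauchySeq_iff.2 fun ε hε => ?_
  obtain ⟨M, hM⟩ := hN (ε / C) (ENNReal.div_pos hε.ne' hC)
  exact ⟨M, fun m hm n hn => (h m n).trans_lt (mul_lt_of_lt_div' (hM m n hm hn))⟩

end ENNReal

section sumPartG

variable {ι : Type*} {p : ℝ≥0∞} (w : ι → ℝ≥0∞)

def sumPartGAddConst (p : ℝ≥0∞) : ℝ≥0∞ := 2 * 2 ^ (1 / p.toReal)

lemma sumPartGAddConst_ne_top (p : ℝ≥0∞) : sumPartGAddConst p ≠ ∞ :=
  mul_ne_top ofNat_ne_top (rpow_ne_top_of_nonneg (by positivity) ofNat_ne_top)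

lemma sumPartG_mono {f g : ι → ℝ≥0∞} (h : f ≤ g) : sumPartG p w f ≤ sumPartG p w g := by
  unfold sumPartG
  split
  · exact iSup_mono h
  · gcongr with i
    exact h i

lemma sumPartG_const_mul (hp : p ≠ 0) (c : ℝ≥0∞) (f : ι → ℝ≥0∞) :
    sumPartG p w (fun i => c * f i) = c * sumPartG p w f := by
  rcases eq_or_ne p ∞ with rfl | hp_top
  · simp only [sumPartG, if_true, ENNReal.mul_iSup]
  have hr : 0 < p.toReal := toReal_pos hp hp_top
  simp only [sumPartG, if_neg hp_top, mul_rpow_of_nonneg _ _ hr.le, mul_left_comm (w _),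
    ENNReal.tsum_mul_left]
  rw [mul_rpow_of_nonneg _ _ (by positivity), one_div, ENNReal.rpow_rpow_inv hr.ne']

lemma sumPartG_add_le (hp : p ≠ 0) (f g : ι → ℝ≥0∞) :
    sumPartG p w (f + g) ≤ sumPartGAddConst p * (sumPartG p w f + sumPartG p w g) := by
  rcases eq_or_ne p ∞ with rfl | hp_top
  · have h_const : sumPartGAddConst ∞ = 2 := by simp [sumPartGAddConst]
    simp only [sumPartG, h_const, if_true]
    calc ⨆ i, (f + g) i ≤ (⨆ i, f i) + ⨆ i, g i :=
          iSup_le fun i => add_le_add (le_iSup f i) (le_iSup g i)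
      _ ≤ 2 * ((⨆ i, f i) + ⨆ i, g i) := le_mul_of_one_le_left' one_le_two
  have hr : 0 < p.toReal := toReal_pos hp hp_top
  set r := p.toReal
  simp only [sumPartG, sumPartGAddConst, if_neg hp_top]
  set A := ∑' i, w i * f i ^ r
  set B := ∑' i, w i * g i ^ r
  have h_sum : ∑' i, w i * (f + g) i ^ r ≤ 2 ^ r * (A + B) :=
    calc ∑' i, w i * (f + g) i ^ r ≤ ∑' i, 2 ^ r * (w i * f i ^ r + w i * g i ^ r) := by
          refine ENNReal.tsum_le_tsum fun i => ?_
          rw [← mul_add, mul_left_comm, Pi.add_apply]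
          exact mul_le_mul_right (rpow_add_le_two_rpow_mul_rpow_add_rpow hr.le _ _) _
      _ = 2 ^ r * (A + B) := by rw [ENNReal.tsum_mul_left, ENNReal.tsum_add]
  calc (∑' i, w i * (f + g) i ^ r) ^ (1 / r) ≤ (2 ^ r * (A + B)) ^ (1 / r) := by gcongr
    _ = 2 * (A + B) ^ (1 / r) := by
        rw [mul_rpow_of_nonneg _ _ (by positivity), one_div, ENNReal.rpow_rpow_inv hr.ne']
    _ ≤ 2 * (2 ^ (1 / r) * (A ^ (1 / r) + B ^ (1 / r))) := by
        gcongr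
        exact rpow_add_le_two_rpow_mul_rpow_add_rpow (by positivity) A B
    _ = 2 * 2 ^ (1 / r) * (A ^ (1 / r) + B ^ (1 / r)) := (mul_assoc _ _ _).symm

lemma sumPartG_liminf_le (hp : p ≠ 0) (hw : ∀ i, w i ≠ ∞) (f : ℕ → ι → ℝ≥0∞) :
    sumPartG p w (fun i => liminf (fun n => f n i) atTop)
      ≤ liminf (fun n => sumPartG p w (f n)) atTop := by
  rcases eq_or_ne p ∞ with rfl | hp_top
  · simp only [sumPartG, if_true]
    exact iSup_le fun i => liminf_le_liminf (Eventually.of_forall fun n => le_iSup (f n) i)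
  have hr : 0 < p.toReal := toReal_pos hp hp_top
  simp only [sumPartG, if_neg hp_top]
  calc (∑' i, w i * liminf (fun n => f n i) atTop ^ p.toReal) ^ (1 / p.toReal)
      = (∑' i, liminf (fun n => w i * f n i ^ p.toReal) atTop) ^ (1 / p.toReal) := by
        simp only [liminf_rpow hr, liminf_const_mul_of_ne_top (hw _)]
    _ ≤ liminf (fun n => ∑' i, w i * f n i ^ p.toReal) atTop ^ (1 / p.toReal) := by
        gcongr
        exact tsum_liminf_le _
    _ = liminf (fun n => (∑' i, w i * f n i ^ p.toReal) ^ (1 / p.toReal)) atTop :=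
        (liminf_rpow (by positivity) _).symm

lemma rpow_mul_le_sumPartG (hp : p ≠ 0) (f : ι → ℝ≥0∞) (i : ι) :
    w i ^ (1 / p.toReal) * f i ≤ sumPartG p w f := by
  rcases eq_or_ne p ∞ with rfl | hp_top
  · simpa [sumPartG] using le_iSup f i
  have hr : 0 < p.toReal := toReal_pos hp hp_top
  simp only [sumPartG, if_neg hp_top]
  calc w i ^ (1 / p.toReal) * f i = (w i * f i ^ p.toReal) ^ (1 / p.toReal) := by
        rw [mul_rpow_of_nonneg _ _ (by positivity), one_div, ENNReal.rpow_rpow_inv hr.ne']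
    _ ≤ (∑' j, w j * f j ^ p.toReal) ^ (1 / p.toReal) := by
        gcongr
        exact ENNReal.le_tsum i

lemma le_sumPartG_one (hp : p ≠ 0) (f : ι → ℝ≥0∞) (i : ι) : f i ≤ sumPartG p (fun _ => 1) f := by
  simpa using rpow_mul_le_sumPartG (fun _ => 1) hp f i

end sumPartG

section seqNorm

variable {Z X : Type*} [MetricSpace Z] [MeasurableSpace Z] (μ : Measure Z) (ξ : X → Z)
  (lvl : X → ℤ) (s : ℝ) {p q : ℝ≥0∞}

def levelNorm (p : ℝ≥0∞) (g : X → ℝ≥0∞) (k : ℤ) : ℝ≥0∞ :=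
  2 ^ ((k : ℝ) * s) *
    sumPartG p (fun x : {x : X // lvl x = k} => μ (vBall ξ lvl x.1)) (fun x => g x.1)

lemma seqNorm_eq_sumPartG_levelNorm (g : X → ℝ≥0∞) :
    seqNorm μ ξ lvl s p q g = sumPartG q (fun _ => 1) (levelNorm μ ξ lvl s p g) := rfl

lemma levelNorm_mono {g₁ g₂ : X → ℝ≥0∞} (h : g₁ ≤ g₂) :
    levelNorm μ ξ lvl s p g₁ ≤ levelNorm μ ξ lvl s p g₂ := fun k =>
  mul_le_mul_right (sumPartG_mono _ fun x : {x : X // lvl x = k} => h x.1) _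

lemma seqNorm_mono {g₁ g₂ : X → ℝ≥0∞} (h : g₁ ≤ g₂) :
    seqNorm μ ξ lvl s p q g₁ ≤ seqNorm μ ξ lvl s p q g₂ :=
  sumPartG_mono _ (levelNorm_mono μ ξ lvl s h)

lemma seqNorm_const_mul (hp : p ≠ 0) (hq : q ≠ 0) (c : ℝ≥0∞) (g : X → ℝ≥0∞) :
    seqNorm μ ξ lvl s p q (fun x => c * g x) = c * seqNorm μ ξ lvl s p q g := by
  have h_level : levelNorm μ ξ lvl s p (fun x => c * g x) =
      fun k => c * levelNorm μ ξ lvl s p g k := by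
    ext k
    simp only [levelNorm, sumPartG_const_mul _ hp, mul_left_comm]
  rw [seqNorm_eq_sumPartG_levelNorm, h_level, sumPartG_const_mul _ hq]
  rfl

lemma seqNorm_add_le (hp : p ≠ 0) (hq : q ≠ 0) (g₁ g₂ : X → ℝ≥0∞) :
    seqNorm μ ξ lvl s p q (g₁ + g₂) ≤ sumPartGAddConst p * sumPartGAddConst q *
      (seqNorm μ ξ lvl s p q g₁ + seqNorm μ ξ lvl s p q g₂) := by
  have h_level : levelNorm μ ξ lvl s p (g₁ + g₂) ≤ fun k => sumPartGAddConst p *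
      (levelNorm μ ξ lvl s p g₁ + levelNorm μ ξ lvl s p g₂) k := fun k => by
    simp only [levelNorm, Pi.add_apply, ← mul_add]
    rw [mul_left_comm]
    exact mul_le_mul_right (sumPartG_add_le _ hp _ _) _
  calc seqNorm μ ξ lvl s p q (g₁ + g₂)
      ≤ sumPartGAddConst p * sumPartG q (fun _ => 1)
          (levelNorm μ ξ lvl s p g₁ + levelNorm μ ξ lvl s p g₂) := by
        rw [seqNorm_eq_sumPartG_levelNorm, ← sumPartG_const_mul _ hq]
        exact sumPartG_mono _ h_level
    _ ≤ sumPartGAddConst p * (sumPartGAddConst q *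
          (seqNorm μ ξ lvl s p q g₁ + seqNorm μ ξ lvl s p q g₂)) :=
        mul_le_mul_right (sumPartG_add_le _ hq _ _) _
    _ = _ := (mul_assoc _ _ _).symm

lemma seqNorm_liminf_le (hp : p ≠ 0) (hq : q ≠ 0) (hμ : ∀ x, μ (vBall ξ lvl x) ≠ ∞)
    (g : ℕ → X → ℝ≥0∞) :
    seqNorm μ ξ lvl s p q (fun x => liminf (fun n => g n x) atTop)
      ≤ liminf (fun n => seqNorm μ ξ lvl s p q (g n)) atTop := by
  have h_level (k : ℤ) : levelNorm μ ξ lvl s p (fun x => liminf (fun n => g n x) atTop) k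
      ≤ liminf (fun n => levelNorm μ ξ lvl s p (g n) k) atTop := by
    simp only [levelNorm]
    rw [liminf_const_mul_of_ne_top (rpow_ne_top_of_ne_zero two_ne_zero ofNat_ne_top)]
    gcongr
    exact sumPartG_liminf_le (fun x : {x : X // lvl x = k} => μ (vBall ξ lvl x.1)) hp
      (fun x => hμ x.1) (fun n x => g n x.1)
  rw [seqNorm_eq_sumPartG_levelNorm]
  exact (sumPartG_mono _ h_level).trans
    (sumPartG_liminf_le _ hq (fun _ => one_ne_top) (fun n => levelNorm μ ξ lvl s p (g n)))

lemma rpow_mul_le_seqNorm (hp : p ≠ 0) (hq : q ≠ 0) (g : X → ℝ≥0∞) (x : X) :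
    2 ^ ((lvl x : ℝ) * s) * μ (vBall ξ lvl x) ^ (1 / p.toReal) * g x
      ≤ seqNorm μ ξ lvl s p q g := by
  rw [mul_assoc]
  exact (mul_le_mul_right (rpow_mul_le_sumPartG _ hp (fun y : {y : X // lvl y = lvl x} => g y.1)
    ⟨x, rfl⟩) _).trans (le_sumPartG_one hq (levelNorm μ ξ lvl s p g) (lvl x))

end seqNorm

section eDu

variable {Z X : Type*} [MetricSpace Z] (ξ : X → Z) (lvl : X → ℤ)

lemma eDu_eq_sumPartG (v : X → ℂ) (x : X) :
    eDu ξ lvl v x = sumPartG 2 (fun _ => 1)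
      (fun y : {y : X // edgeRel ξ lvl x y} => (‖v y.1 - v x‖₊ : ℝ≥0∞)) := by
  norm_num [eDu, sumPartG]

lemma nnnorm_sub_le_eDu {x y : X} (h : edgeRel ξ lvl x y) (v : X → ℂ) :
    (‖v y - v x‖₊ : ℝ≥0∞) ≤ eDu ξ lvl v x := by
  rw [eDu_eq_sumPartG]
  exact le_sumPartG_one two_ne_zero _ (⟨y, h⟩ : {y : X // edgeRel ξ lvl x y})

lemma eDu_sub_comm (v w : X → ℂ) :
    eDu ξ lvl (fun y => v y - w y) = eDu ξ lvl (fun y => w y - v y) := by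
  ext x
  simp only [eDu_eq_sumPartG]
  congr 1
  ext y
  rw [← nnnorm_neg]
  ring_nf

lemma eDu_add_le (v w : X → ℂ) (x : X) :
    eDu ξ lvl (fun y => v y + w y) x
      ≤ sumPartGAddConst 2 * (eDu ξ lvl v x + eDu ξ lvl w x) := by
  simp only [eDu_eq_sumPartG]
  refine le_trans (sumPartG_mono _ fun y => ?_) (sumPartG_add_le _ two_ne_zero _ _)
  rw [Pi.add_apply, add_sub_add_comm]
  exact (ENNReal.coe_le_coe.2 (nnnorm_add_le _ _)).trans_eq (ENNReal.coe_add _ _)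

lemma eDu_le_liminf {v : ℕ → X → ℂ} {v' : X → ℂ}
    (hv : ∀ y, Tendsto (fun n => v n y) atTop (nhds (v' y))) (x : X) :
    eDu ξ lvl v' x ≤ liminf (fun n => eDu ξ lvl (v n) x) atTop := by
  simp only [eDu_eq_sumPartG]
  have h_term (y : {y : X // edgeRel ξ lvl x y}) :
      (‖v' y.1 - v' x‖₊ : ℝ≥0∞) = liminf (fun n => (‖v n y.1 - v n x‖₊ : ℝ≥0∞)) atTop :=
    (ENNReal.tendsto_coe.2 ((hv y.1).sub (hv x)).nnnorm).liminf_eq.symm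
  simp only [h_term]
  exact sumPartG_liminf_le _ two_ne_zero (fun _ => one_ne_top) _

end eDu

section seqNormEDu

variable {Z X : Type*} [MetricSpace Z] [MeasurableSpace Z] (μ : Measure Z) (ξ : X → Z)
  (lvl : X → ℤ) (s : ℝ) {p q : ℝ≥0∞}

lemma seqNorm_eDu_add_le (hp : p ≠ 0) (hq : q ≠ 0) (v w : X → ℂ) :
    seqNorm μ ξ lvl s p q (eDu ξ lvl (fun x => v x + w x))
      ≤ sumPartGAddConst 2 * (sumPartGAddConst p * sumPartGAddConst q) *
        (seqNorm μ ξ lvl s p q (eDu ξ lvl v) + seqNorm μ ξ lvl s p q (eDu ξ lvl w)) := by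
  calc seqNorm μ ξ lvl s p q (eDu ξ lvl (fun x => v x + w x))
      ≤ seqNorm μ ξ lvl s p q (fun x => sumPartGAddConst 2 * (eDu ξ lvl v + eDu ξ lvl w) x) :=
        seqNorm_mono μ ξ lvl s (eDu_add_le ξ lvl v w)
    _ ≤ _ := by
        rw [seqNorm_const_mul μ ξ lvl s hp hq, mul_assoc]
        exact mul_le_mul_right (seqNorm_add_le μ ξ lvl s hp hq _ _) _

lemma seqNorm_eDu_le_liminf (hp : p ≠ 0) (hq : q ≠ 0) (hμ : ∀ x, μ (vBall ξ lvl x) ≠ ∞)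
    {v : ℕ → X → ℂ} {v' : X → ℂ} (hv : ∀ y, Tendsto (fun n => v n y) atTop (nhds (v' y))) :
    seqNorm μ ξ lvl s p q (eDu ξ lvl v')
      ≤ liminf (fun n => seqNorm μ ξ lvl s p q (eDu ξ lvl (v n))) atTop :=
  (seqNorm_mono μ ξ lvl s (eDu_le_liminf ξ lvl hv)).trans
    (seqNorm_liminf_le μ ξ lvl s hp hq hμ _)

lemma exists_le_mul_seqNorm (hp : p ≠ 0) (hq : q ≠ 0) {x : X} (hμ₀ : μ (vBall ξ lvl x) ≠ 0)
    (hμ : μ (vBall ξ lvl x) ≠ ∞) : ∃ C ≠ ∞, ∀ g : X → ℝ≥0∞, g x ≤ C * seqNorm μ ξ lvl s p q g := by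
  set c := 2 ^ ((lvl x : ℝ) * s) * μ (vBall ξ lvl x) ^ (1 / p.toReal)
  have hc₀ : c ≠ 0 := mul_ne_zero (by simp) (by simp [ENNReal.rpow_eq_zero_iff, hμ₀, hμ])
  have hc : c ≠ ∞ := mul_ne_top (rpow_ne_top_of_ne_zero two_ne_zero ofNat_ne_top)
    (rpow_ne_top_of_nonneg (by positivity) hμ)
  refine ⟨c⁻¹, inv_ne_top.2 hc₀, fun g => ?_⟩
  rw [← ENNReal.div_eq_inv_mul, ENNReal.le_div_iff_mul_le (Or.inl hc₀) (Or.inl hc), mul_comm]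
  exact rpow_mul_le_seqNorm μ ξ lvl s hp hq g x

lemma exists_nnnorm_sub_le_mul_seqNorm_eDu (hp : p ≠ 0) (hq : q ≠ 0)
    (hμ₀ : ∀ x, μ (vBall ξ lvl x) ≠ 0) (hμ : ∀ x, μ (vBall ξ lvl x) ≠ ∞) {x₀ x : X}
    (h : Relation.ReflTransGen (edgeRel ξ lvl) x₀ x) :
    ∃ C ≠ ∞, ∀ v : X → ℂ,
      (‖v x - v x₀‖₊ : ℝ≥0∞) ≤ C * seqNorm μ ξ lvl s p q (eDu ξ lvl v) := by
  induction h with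
  | refl => exact ⟨0, zero_ne_top, fun v => by simp⟩
  | @tail b c _ hbc ih =>
    obtain ⟨C, hC, hCv⟩ := ih
    obtain ⟨D, hD, hDg⟩ := exists_le_mul_seqNorm μ ξ lvl s hp hq (hμ₀ b) (hμ b)
    refine ⟨D + C, add_ne_top.2 ⟨hD, hC⟩, fun v => ?_⟩
    calc (‖v c - v x₀‖₊ : ℝ≥0∞) ≤ ‖v c - v b‖₊ + ‖v b - v x₀‖₊ := by
          rw [← sub_add_sub_cancel (v c) (v b) (v x₀)]
          exact (ENNReal.coe_le_coe.2 (nnnorm_add_le _ _)).trans_eq (ENNReal.coe_add _ _)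
      _ ≤ D * seqNorm μ ξ lvl s p q (eDu ξ lvl v) + C * seqNorm μ ξ lvl s p q (eDu ξ lvl v) :=
          add_le_add ((nnnorm_sub_le_eDu ξ lvl hbc v).trans (hDg _)) (hCv v)
      _ = (D + C) * seqNorm μ ξ lvl s p q (eDu ξ lvl v) := (add_mul _ _ _).symm

end seqNormEDu

section connectivity

variable {Z X : Type*} [MetricSpace Z] {ξ : X → Z} {lvl : X → ℤ}

instance : Std.Symm (edgeRel ξ lvl) :=
  ⟨fun x y h => ⟨h.1.symm, abs_sub_comm (lvl x) (lvl y) ▸ h.2.1,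
    Set.inter_comm (vBall ξ lvl x) _ ▸ h.2.2⟩⟩

lemma reflTransGen_edgeRel_of_inter_nonempty {x y : X} (hlvl : |lvl x - lvl y| ≤ 1)
    (hxy : (vBall ξ lvl x ∩ vBall ξ lvl y).Nonempty) :
    Relation.ReflTransGen (edgeRel ξ lvl) x y := by
  rcases eq_or_ne x y with rfl | hne
  · exact .refl
  · exact .single ⟨hne, hlvl, hxy⟩

lemma exists_lvl_eq_mem_vBall
    (hmax : ∀ (n : ℤ) (z : Z), ∃ x : X, lvl x = n ∧ dist z (ξ x) < (2:ℝ) ^ (-n - 1))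
    (n : ℤ) (z : Z) : ∃ x, lvl x = n ∧ z ∈ vBall ξ lvl x := by
  obtain ⟨x, hx, hzx⟩ := hmax n z
  refine ⟨x, hx, hzx.trans ?_⟩
  rw [hx]
  exact zpow_lt_zpow_right₀ one_lt_two (by omega)

lemma exists_reflTransGen_lvl_eq_mem_vBall
    (hcover : ∀ (n : ℤ) (z : Z), ∃ x : X, lvl x = n ∧ z ∈ vBall ξ lvl x)
    {y : X} {z : Z} (hz : z ∈ vBall ξ lvl y) {n : ℤ} (hn : n ≤ lvl y) :
    ∃ y', lvl y' = n ∧ z ∈ vBall ξ lvl y' ∧ Relation.ReflTransGen (edgeRel ξ lvl) y y' := by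
  induction n, hn using Int.leInductionDown with
  | base => exact ⟨y, rfl, hz, .refl⟩
  | pred n _ ih =>
    obtain ⟨y', hy', hzy', hyy'⟩ := ih
    obtain ⟨a, ha, hza⟩ := hcover (n - 1) z
    exact ⟨a, ha, hza, hyy'.trans
      (reflTransGen_edgeRel_of_inter_nonempty (by rw [hy', ha]; norm_num) ⟨z, hzy', hza⟩)⟩

lemma reflTransGen_edgeRel_of_mem_vBall
    (hcover : ∀ (n : ℤ) (z : Z), ∃ x : X, lvl x = n ∧ z ∈ vBall ξ lvl x)
    {x y : X} {z : Z} (hx : z ∈ vBall ξ lvl x) (hy : z ∈ vBall ξ lvl y) :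
    Relation.ReflTransGen (edgeRel ξ lvl) x y := by
  wlog hle : lvl y ≤ lvl x generalizing x y
  · exact Std.Symm.symm _ _ (this hy hx (le_of_not_ge hle))
  obtain ⟨y', hy', hzy', hxy'⟩ := exists_reflTransGen_lvl_eq_mem_vBall hcover hx hle
  exact hxy'.trans (reflTransGen_edgeRel_of_inter_nonempty (by simp [hy']) ⟨z, hzy', hy⟩)

lemma reflTransGen_edgeRel
    (hmax : ∀ (n : ℤ) (z : Z), ∃ x : X, lvl x = n ∧ dist z (ξ x) < (2:ℝ) ^ (-n - 1))
    (x y : X) : Relation.ReflTransGen (edgeRel ξ lvl) x y := by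
  -- with `dist (ξ x) (ξ y) < 2 ^ K`, a vertex of level `-K - 1` near `ξ x` has both points
  -- in its ball
  obtain ⟨K, hK⟩ := pow_unbounded_of_one_lt (dist (ξ x) (ξ y)) (one_lt_two (α := ℝ))
  obtain ⟨a, ha, hxa⟩ := hmax (-K - 1) (ξ x)
  have h_radius : (2:ℝ) ^ (-lvl a) = 2 ^ K + 2 ^ K := by
    rw [ha, ← two_mul, ← pow_succ', ← zpow_natCast]
    congr 1
    push_cast
    ring
  rw [show -(-(K:ℤ) - 1) - 1 = K by ring, zpow_natCast] at hxa
  have hxa' : ξ x ∈ vBall ξ lvl a :=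
    mem_ball.2 (by rw [h_radius]; linarith [pow_pos (two_pos (α := ℝ)) K])
  have hya : ξ y ∈ vBall ξ lvl a := mem_ball.2 <| by
    rw [h_radius]
    linarith [dist_triangle (ξ y) (ξ x) (ξ a), dist_comm (ξ x) (ξ y)]
  have h_self (b : X) : ξ b ∈ vBall ξ lvl b := mem_ball_self (zpow_pos two_pos _)
  have hcover := exists_lvl_eq_mem_vBall hmax
  exact (reflTransGen_edgeRel_of_mem_vBall hcover (h_self x) hxa').trans
    (reflTransGen_edgeRel_of_mem_vBall hcover hya (h_self y))

end connectivity

section completeness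

variable {Z X : Type*} [MetricSpace Z] [MeasurableSpace Z] (μ : Measure Z) (ξ : X → Z)
  (lvl : X → ℤ) (s : ℝ) {p q : ℝ≥0∞}

lemma tendsto_seqNorm_eDu_sub (hp : p ≠ 0) (hq : q ≠ 0) (hμ : ∀ x, μ (vBall ξ lvl x) ≠ ∞)
    {U : ℕ → X → ℂ} {u : X → ℂ}
    (hU : ∀ ε : ℝ≥0∞, 0 < ε → ∃ M : ℕ, ∀ m n : ℕ, M ≤ m → M ≤ n →
      seqNorm μ ξ lvl s p q (eDu ξ lvl (fun x => U m x - U n x)) < ε)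
    (hu : ∀ x, Tendsto (fun n => U n x) atTop (nhds (u x))) :
    Tendsto (fun n => seqNorm μ ξ lvl s p q (eDu ξ lvl (fun x => U n x - u x))) atTop (nhds 0) := by
  refine ENNReal.tendsto_atTop_zero.2 fun ε hε => ?_
  obtain ⟨M, hM⟩ := hU ε hε
  refine ⟨M, fun m hm => (seqNorm_eDu_le_liminf μ ξ lvl s hp hq hμ
    fun x => tendsto_const_nhds.sub (hu x)).trans ?_⟩
  exact liminf_le_of_frequently_le
    ((eventually_ge_atTop M).mono fun n hn => (hM m n hm hn).le).frequently

end completeness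

theorem statement14_general {Z : Type*} [MetricSpace Z] [MeasurableSpace Z]
    (μ : Measure Z)
    (hpos : ∀ (ζ : Z) (r : ℝ), 0 < r → 0 < μ (Metric.ball ζ r))
    (hfin : ∀ (ζ : Z) (r : ℝ), μ (Metric.ball ζ r) < ∞)
    {X : Type*} (ξ : X → Z) (lvl : X → ℤ)
    (hmax : ∀ (n : ℤ) (z : Z), ∃ x : X, lvl x = n ∧ dist z (ξ x) < (2:ℝ) ^ (-n - 1))
    (x₀ : X) (s : ℝ) (p q : ℝ≥0∞) (hp : 0 < p) (hq : 0 < q) :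
    ∀ U : ℕ → X → ℂ,
      (∀ n, U n x₀ = 0 ∧ seqNorm μ ξ lvl s p q (eDu ξ lvl (U n)) < ∞) →
      (∀ ε : ℝ≥0∞, 0 < ε → ∃ M : ℕ, ∀ m n : ℕ, M ≤ m → M ≤ n →
        seqNorm μ ξ lvl s p q (eDu ξ lvl (fun x => U m x - U n x)) < ε) →
      ∃ u : X → ℂ, u x₀ = 0 ∧ seqNorm μ ξ lvl s p q (eDu ξ lvl u) < ∞ ∧
        Filter.Tendsto (fun n => seqNorm μ ξ lvl s p q (eDu ξ lvl (fun x => U n x - u x)))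
          Filter.atTop (nhds 0) ∧
        ∀ x : X, Filter.Tendsto (fun n => U n x) Filter.atTop (nhds (u x)) := by
  intro U hU hCauchy
  have hμ₀ (x : X) : μ (vBall ξ lvl x) ≠ 0 := (hpos _ _ (zpow_pos two_pos _)).ne'
  have hμ (x : X) : μ (vBall ξ lvl x) ≠ ∞ := (hfin _ _).ne
  have h_pointwise (x : X) : CauchySeq (fun n => U n x) := by
    obtain ⟨C, hC, hCv⟩ := exists_nnnorm_sub_le_mul_seqNorm_eDu μ ξ lvl s hp.ne' hq.ne' hμ₀ hμ
      (reflTransGen_edgeRel hmax x₀ x)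
    refine ENNReal.cauchySeq_of_edist_le_mul hC (fun m n => ?_) hCauchy
    simpa [edist_eq_enorm_sub, enorm_eq_nnnorm, (hU m).1, (hU n).1] using hCv fun y => U m y - U n y
  choose u hu using fun x => cauchySeq_tendsto_of_complete (h_pointwise x)
  have h_conv := tendsto_seqNorm_eDu_sub μ ξ lvl s hp.ne' hq.ne' hμ hCauchy hu
  obtain ⟨M, hM⟩ := ENNReal.tendsto_atTop_zero.1 h_conv 1 one_pos
  refine ⟨u, tendsto_nhds_unique (hu x₀) (by simp [fun n => (hU n).1]), ?_, h_conv, hu⟩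
  calc seqNorm μ ξ lvl s p q (eDu ξ lvl u)
      = seqNorm μ ξ lvl s p q (eDu ξ lvl (fun x => (u x - U M x) + U M x)) := by simp
    _ ≤ _ := seqNorm_eDu_add_le μ ξ lvl s hp.ne' hq.ne' _ _
    _ < ∞ := by
        rw [eDu_sub_comm]
        refine mul_lt_top (mul_ne_top (sumPartGAddConst_ne_top 2) (mul_ne_top
          (sumPartGAddConst_ne_top p) (sumPartGAddConst_ne_top q))).lt_top ?_
        exact add_lt_top.2 ⟨(hM M le_rfl).trans_lt one_lt_top, (hU M).2⟩

/-- the space `D̊^s_{p,q}(X)` of sequences vanishing at `x₀` with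
`|du| ∈ I^s_{p,q}(X)`, with quasinorm `u ↦ ‖du‖`, is complete, and Cauchy sequences in it
converge pointwise on `X`. -/
theorem statement14 {Z : Type*} [MetricSpace Z] [MeasurableSpace Z] [BorelSpace Z]
    (μ : Measure Z) (c : ℝ≥0) (hc : 1 ≤ c)
    (hdoub : ∀ (ζ : Z) (r : ℝ), 0 < r → μ (Metric.ball ζ (2 * r)) ≤ c * μ (Metric.ball ζ r))
    (hpos : ∀ (ζ : Z) (r : ℝ), 0 < r → 0 < μ (Metric.ball ζ r))
    (hfin : ∀ (ζ : Z) (r : ℝ), μ (Metric.ball ζ r) < ∞)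
    {X : Type*} (ξ : X → Z) (lvl : X → ℤ)
    (hsep : ∀ x y : X, x ≠ y → lvl x = lvl y → (2:ℝ) ^ (-lvl x - 1) ≤ dist (ξ x) (ξ y))
    (hmax : ∀ (n : ℤ) (z : Z), ∃ x : X, lvl x = n ∧ dist z (ξ x) < (2:ℝ) ^ (-n - 1))
    (x₀ : X) (s : ℝ) (hs : 0 < s) (p q : ℝ≥0∞) (hp : 0 < p) (hq : 0 < q) :
    ∀ U : ℕ → X → ℂ,
      (∀ n, U n x₀ = 0 ∧ seqNorm μ ξ lvl s p q (eDu ξ lvl (U n)) < ∞) →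
      (∀ ε : ℝ≥0∞, 0 < ε → ∃ M : ℕ, ∀ m n : ℕ, M ≤ m → M ≤ n →
        seqNorm μ ξ lvl s p q (eDu ξ lvl (fun x => U m x - U n x)) < ε) →
      ∃ u : X → ℂ, u x₀ = 0 ∧ seqNorm μ ξ lvl s p q (eDu ξ lvl u) < ∞ ∧
        Filter.Tendsto (fun n => seqNorm μ ξ lvl s p q (eDu ξ lvl (fun x => U n x - u x)))
          Filter.atTop (nhds 0) ∧
        ∀ x : X, Filter.Tendsto (fun n => U n x) Filter.atTop (nhds (u x)) :=
  statement14_general μ hpos hfin ξ lvl hmax x₀ s p q hp hq
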